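/- arXiv:2302.03521 — 4 statements merged into one kernel-verified Lean document; each statement's English description precedes it below -/
import Mathlib

section
/- For all real x and all real y with |y| = M > 0, we have |tan(π(x+iy))|² ≤ (1 - 1/cosh(2πM))^{-2}. Moreover, if M > 1/π then |tan(π(x+iy))|² ≤ 4. -/
/-!
For `z = a + b i` one has `‖sin z‖² = sin² a + sinh² b` and `‖cos z‖² = cos² a + sinh² b`, so
`‖tan z‖² ≤ 1 + 1 / sinh² b`. With `s = sinh² b`, `cosh 2b = 1 + 2s` turns the claimed bound into
`((1 + 2s) / 2s)²`, which exceeds `(1 + s) / s` because `(1 + 2s)² = 4s(1 + s) + 1`.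
When `|b| > 1`, `cosh 2b ≥ 1 + 2b² > 2`, and then `(1 - 1 / cosh 2b)⁻² < 4`.
-/

namespace Complex

theorem sq_norm_sin_add_mul_I (a b : ℝ) :
    ‖sin (a + b * I)‖ ^ 2 = Real.sin a ^ 2 + Real.sinh b ^ 2 := by
  rw [sin_add_mul_I, ← ofReal_sin, ← ofReal_cosh, ← ofReal_cos, ← ofReal_sinh, ← ofReal_mul,
    ← ofReal_mul, Complex.sq_norm, normSq_add_mul_I]
  linear_combination Real.sin a ^ 2 * Real.cosh_sq b + Real.sinh b ^ 2 * Real.sin_sq_add_cos_sq a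

theorem sq_norm_cos_add_mul_I (a b : ℝ) :
    ‖cos (a + b * I)‖ ^ 2 = Real.cos a ^ 2 + Real.sinh b ^ 2 := by
  rw [cos_add_mul_I, ← ofReal_sin, ← ofReal_cosh, ← ofReal_cos, ← ofReal_sinh, ← ofReal_mul,
    ← ofReal_mul, sub_eq_add_neg, ← neg_mul, ← ofReal_neg, Complex.sq_norm, normSq_add_mul_I]
  linear_combination Real.cos a ^ 2 * Real.cosh_sq b + Real.sinh b ^ 2 * Real.sin_sq_add_cos_sq a

theorem sq_norm_tan_add_mul_I_le (a b : ℝ) (hb : b ≠ 0) :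
    ‖tan (a + b * I)‖ ^ 2 ≤ 1 + (Real.sinh b ^ 2)⁻¹ := by
  have hs : 0 < Real.sinh b ^ 2 := by positivity
  rw [tan_eq_sin_div_cos, norm_div, div_pow, sq_norm_sin_add_mul_I, sq_norm_cos_add_mul_I,
    div_le_iff₀ (by positivity)]
  have hcos : 0 ≤ Real.cos a ^ 2 * (Real.sinh b ^ 2)⁻¹ := by positivity
  nlinarith [Real.sin_sq_le_one a, mul_inv_cancel₀ hs.ne']

end Complex

namespace Real

theorem cosh_two_mul_eq_one_add_two_mul_sinh_sq (b : ℝ) : cosh (2 * b) = 1 + 2 * sinh b ^ 2 := by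
  rw [cosh_two_mul, cosh_sq']
  ring

theorem one_add_two_mul_sq_le_cosh_two_mul (b : ℝ) : 1 + 2 * b ^ 2 ≤ cosh (2 * b) := by
  rw [cosh_two_mul_eq_one_add_two_mul_sinh_sq, ← sq_abs b, ← sq_abs (sinh b), abs_sinh]
  gcongr
  exact self_le_sinh_iff.2 (abs_nonneg b)

theorem one_add_inv_sinh_sq_le (b : ℝ) (hb : b ≠ 0) :
    1 + (sinh b ^ 2)⁻¹ ≤ ((1 - 1 / cosh (2 * b)) ^ 2)⁻¹ := by
  rw [cosh_two_mul_eq_one_add_two_mul_sinh_sq]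
  have hs : 0 < sinh b ^ 2 := by positivity
  generalize sinh b ^ 2 = s at hs
  have hgap : 1 - 1 / (1 + 2 * s) = 2 * s / (1 + 2 * s) := by field_simp; ring
  rw [hgap, div_pow, inv_div, le_div_iff₀ (by positivity)]
  field_simp
  nlinarith

end Real

theorem inv_sq_one_sub_inv_le_four {c : ℝ} (hc : 2 ≤ c) : ((1 - 1 / c) ^ 2)⁻¹ ≤ 4 := by
  have hhalf : 1 / 2 ≤ 1 - 1 / c := by
    linarith [one_div_le_one_div_of_le two_pos hc]
  rw [inv_le_comm₀ (by positivity) (by norm_num)]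
  nlinarith

theorem tan_sq_bound_large_imaginary_part
    (x y M : ℝ) (hM : 0 < M) (hy : |y| = M) :
    ‖Complex.tan ((Real.pi : ℂ) * (x + y * Complex.I))‖ ^ 2
        ≤ ((1 - 1 / Real.cosh (2 * Real.pi * M)) ^ 2)⁻¹ ∧
      (1 / Real.pi < M →
        ‖Complex.tan ((Real.pi : ℂ) * (x + y * Complex.I))‖ ^ 2
          ≤ 4) := by
  have hz : (Real.pi : ℂ) * (x + y * Complex.I)
      = ((Real.pi * x : ℝ) : ℂ) + ((Real.pi * y : ℝ) : ℂ) * Complex.I := by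
    push_cast
    ring
  have hcosh : Real.cosh (2 * Real.pi * M) = Real.cosh (2 * (Real.pi * y)) := by
    rw [← Real.cosh_abs (2 * (Real.pi * y)), abs_mul, abs_mul, abs_two, abs_of_pos Real.pi_pos,
      hy, mul_assoc]
  have hb : Real.pi * y ≠ 0 := mul_ne_zero Real.pi_ne_zero (abs_pos.1 (hy ▸ hM))
  have hbound : ‖Complex.tan ((Real.pi : ℂ) * (x + y * Complex.I))‖ ^ 2
      ≤ ((1 - 1 / Real.cosh (2 * Real.pi * M)) ^ 2)⁻¹ := by
    rw [hz, hcosh]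
    exact (Complex.sq_norm_tan_add_mul_I_le _ _ hb).trans (Real.one_add_inv_sinh_sq_le _ hb)
  refine ⟨hbound, fun hMpi => hbound.trans (inv_sq_one_sub_inv_le_four ?_)⟩
  have hπM : 1 < Real.pi * M := by rwa [div_lt_iff₀' Real.pi_pos] at hMpi
  calc (2 : ℝ) ≤ 1 + 2 * (Real.pi * M) ^ 2 := by nlinarith
    _ ≤ Real.cosh (2 * Real.pi * M) := by
      rw [mul_assoc]
      exact Real.one_add_two_mul_sq_le_cosh_two_mul _
end

section
/- Let a₁ ≤ a₂ be real numbers and s ∈ ℂ. The function φ(t) = t^{s-1} on (0,∞) satisfies, for every k ∈ ℕ, sup over t ∈ (0,∞) of ζ(t)·t^{k+1}·|φ^{(k)}(t)| < ∞ (where ζ(t) = t^{-a₁} for 0 < t ≤ 1 and ζ(t) = t^{-a₂} for t > 1) if and only if a₁ ≤ Re(s) ≤ a₂. -/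
/-!
The `k`-th derivative of `t ↦ t ^ (s - 1)` is `(s - 1) ⋯ (s - k) t ^ (s - 1 - k)`, so the weighted
quantity equals `‖(s - 1) ⋯ (s - k)‖ t ^ (re s - a₁)` on `(0, 1]` and
`‖(s - 1) ⋯ (s - k)‖ t ^ (re s - a₂)` on `(1, ∞)`. A real power `t ^ b` is bounded on `(0, 1]`
iff `0 ≤ b` and on `(1, ∞)` iff `b ≤ 0`; the case `k = 0`, where the constant is `1`, gives
necessity.
-/

open Complex Filter Topology

lemma hasDerivAt_ofReal_cpow_const_of_pos {t : ℝ} (ht : 0 < t) (w : ℂ) :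
    HasDerivAt (fun u : ℝ => (u : ℂ) ^ w) (w * (t : ℂ) ^ (w - 1)) t := by
  simpa using ((hasDerivAt_id (t : ℂ)).cpow_const (by simp [mem_slitPlane_iff, ht])).comp_ofReal

lemma iteratedDeriv_ofReal_cpow_const (w : ℂ) (k : ℕ) {t : ℝ} (ht : 0 < t) :
    iteratedDeriv k (fun u : ℝ => (u : ℂ) ^ w) t
      = (∏ i ∈ Finset.range k, (w - i)) * (t : ℂ) ^ (w - k) := by
  induction k generalizing t with
  | zero => simp
  | succ k ih =>
    have hev : iteratedDeriv k (fun u : ℝ => (u : ℂ) ^ w)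
        =ᶠ[𝓝 t] fun u : ℝ => (∏ i ∈ Finset.range k, (w - i)) * (u : ℂ) ^ (w - k) := by
      filter_upwards [Ioi_mem_nhds ht] with u hu using ih hu
    rw [iteratedDeriv_succ, hev.deriv_eq,
      ((hasDerivAt_ofReal_cpow_const_of_pos ht _).const_mul _).deriv, Finset.prod_range_succ]
    push_cast
    rw [← sub_sub]
    ring

lemma norm_ofReal_cpow_of_pos {t : ℝ} (ht : 0 < t) (w : ℂ) : ‖(t : ℂ) ^ w‖ = t ^ w.re := by
  simp [norm_cpow_eq_rpow_re_of_pos ht]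

lemma rpow_neg_mul_rpow_mul_norm_iteratedDeriv_cpow (a : ℝ) (s : ℂ) (k : ℕ) {t : ℝ} (ht : 0 < t) :
    t ^ (-a) * t ^ (k + 1 : ℝ) * ‖iteratedDeriv k (fun u : ℝ => (u : ℂ) ^ (s - 1)) t‖
      = ‖∏ i ∈ Finset.range k, (s - 1 - i)‖ * t ^ (s.re - a) := by
  have hexp : t ^ (-a) * t ^ (k + 1 : ℝ) * t ^ (s - 1 - k).re = t ^ (s.re - a) := by
    rw [← Real.rpow_add ht, ← Real.rpow_add ht]
    congr 1
    simp only [sub_re, one_re, natCast_re]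
    ring
  rw [iteratedDeriv_ofReal_cpow_const _ _ ht, norm_mul, norm_ofReal_cpow_of_pos ht]
  linear_combination ‖∏ i ∈ Finset.range k, (s - 1 - i)‖ * hexp

lemma exists_forall_ite_rpow_le_iff (b₁ b₂ : ℝ) :
    (∃ C : ℝ, ∀ t : ℝ, 0 < t → (if t ≤ 1 then t ^ b₁ else t ^ b₂) ≤ C) ↔ 0 ≤ b₁ ∧ b₂ ≤ 0 := by
  constructor
  · rintro ⟨C, hC⟩
    constructor
    · by_contra! hb₁
      obtain ⟨t, htC, ht⟩ := (((tendsto_rpow_neg_nhdsGT_zero hb₁).eventually_gt_atTop C).and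
        (Ioc_mem_nhdsGT zero_lt_one)).exists
      have := hC t ht.1
      rw [if_pos ht.2] at this
      linarith
    · by_contra! hb₂
      obtain ⟨t, htC, ht⟩ := (((tendsto_rpow_atTop hb₂).eventually_gt_atTop C).and
        (eventually_gt_atTop 1)).exists
      have := hC t (zero_lt_one.trans ht)
      rw [if_neg ht.not_ge] at this
      linarith
  · rintro ⟨hb₁, hb₂⟩
    refine ⟨1, fun t ht => ?_⟩
    split_ifs with ht₁
    · exact Real.rpow_le_one ht.le ht₁ hb₁
    · exact Real.rpow_le_one_of_one_le_of_nonpos (le_of_not_ge ht₁) hb₂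

theorem t_pow_s_sub_one_in_M_a1_a2_iff_general
    (a₁ a₂ : ℝ) (s : ℂ) :
    (∀ k : ℕ, ∃ C : ℝ, ∀ t : ℝ, 0 < t →
        (if t ≤ 1 then t ^ (-a₁) else t ^ (-a₂)) * t ^ (k + 1 : ℝ)
            * ‖iteratedDeriv k (fun u : ℝ => (u:ℂ) ^ (s - 1)) t‖
          ≤ C)
      ↔ (a₁ ≤ s.re ∧ s.re ≤ a₂) := by
  have weighted_eq : ∀ k : ℕ, ∀ t : ℝ, 0 < t →
      (if t ≤ 1 then t ^ (-a₁) else t ^ (-a₂)) * t ^ (k + 1 : ℝ)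
          * ‖iteratedDeriv k (fun u : ℝ => (u:ℂ) ^ (s - 1)) t‖
        = ‖∏ i ∈ Finset.range k, (s - 1 - i)‖
          * (if t ≤ 1 then t ^ (s.re - a₁) else t ^ (s.re - a₂)) := by
    intro k t ht
    split_ifs <;> exact rpow_neg_mul_rpow_mul_norm_iteratedDeriv_cpow _ s k ht
  rw [← sub_nonneg, ← sub_nonpos (a := s.re), ← exists_forall_ite_rpow_le_iff]
  constructor
  · intro H
    obtain ⟨C, hC⟩ := H 0
    refine ⟨C, fun t ht => ?_⟩
    simpa only [weighted_eq 0 t ht, Finset.prod_range_zero, norm_one, one_mul] using hC t ht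
  · rintro ⟨C, hC⟩ k
    refine ⟨‖∏ i ∈ Finset.range k, (s - 1 - i)‖ * C, fun t ht => ?_⟩
    rw [weighted_eq k t ht]
    exact mul_le_mul_of_nonneg_left (hC t ht) (norm_nonneg _)

theorem t_pow_s_sub_one_in_M_a1_a2_iff
    (a₁ a₂ : ℝ) (h : a₁ ≤ a₂) (s : ℂ) :
    (∀ k : ℕ, ∃ C : ℝ, ∀ t : ℝ, 0 < t →
        (if t ≤ 1 then t ^ (-a₁) else t ^ (-a₂)) * t ^ (k + 1 : ℝ)
            * ‖iteratedDeriv k (fun u : ℝ => (u:ℂ) ^ (s - 1)) t‖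
          ≤ C)
      ↔ (a₁ ≤ s.re ∧ s.re ≤ a₂) :=
  t_pow_s_sub_one_in_M_a1_a2_iff_general a₁ a₂ s
end

section
/- Let φ : (0,∞) → ℂ be smooth with finite norms N₀ = sup_{t} ζ_{a,b}(t)·t·|φ(t)| and N₁ = sup_t ζ_{a,b}(t)·t²·|φ'(t)| for some 0 < a < b < 1, where ζ_{a,b}(t) = t^{-a} for t ≤ 1 and t^{-b} for t > 1. Then the principal value p.v. ∫_0^∞ φ(t)/(1-t) dt exists and equals (∫_0^{1/2} + ∫_{3/2}^∞) φ(t)/(1-t) dt − ∫_{1/2}^{3/2} (φ(t)-φ(1))/(t-1) dt, and there is a constant C depending only on a, b with |p.v. ∫_0^∞ φ(t)/(1-t) dt| ≤ C(N₀ + N₁). -/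
open MeasureTheory Filter

set_option maxHeartbeats 1000000 in
theorem pv_hilbert_kernel_pairing (a b : ℝ) (ha : 0 < a) (hab : a < b) (hb : b < 1) :
    ∃ C : ℝ, ∀ (φ : ℝ → ℂ) (N₀ N₁ : ℝ),
      ContDiffOn ℝ (⊤ : ℕ∞) φ (Set.Ioi 0) →
      (∀ t : ℝ, 0 < t →
          (if t ≤ 1 then t ^ (-a) else t ^ (-b)) * t * ‖φ t‖ ≤ N₀) →
      (∀ t : ℝ, 0 < t →
          (if t ≤ 1 then t ^ (-a) else t ^ (-b)) * t ^ (2:ℕ)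
            * ‖deriv φ t‖ ≤ N₁) →
      (Tendsto (fun ε : ℝ =>
            (∫ t in Set.Ioo (0:ℝ) (1 - ε), φ t / (1 - (t:ℂ)))
              + ∫ t in Set.Ioi (1 + ε), φ t / (1 - (t:ℂ)))
          (nhdsWithin 0 (Set.Ioi 0))
          (nhds (((∫ t in Set.Ioo (0:ℝ) (1/2), φ t / (1 - (t:ℂ)))
              + ∫ t in Set.Ioi (3/2 : ℝ), φ t / (1 - (t:ℂ)))
            - ∫ t in Set.Ioo (1/2 : ℝ) (3/2), (φ t - φ 1) / ((t:ℂ) - 1)))) ∧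
      ‖((∫ t in Set.Ioo (0:ℝ) (1/2), φ t / (1 - (t:ℂ)))
              + ∫ t in Set.Ioi (3/2 : ℝ), φ t / (1 - (t:ℂ)))
            - ∫ t in Set.Ioo (1/2 : ℝ) (3/2), (φ t - φ 1) / ((t:ℂ) - 1)‖
        ≤ C * (N₀ + N₁) := by
  refine ⟨2/a + 3/(1-b) + 4, ?_⟩
  intro φ N₀ N₁ hφ h0 h1
  have hb0 : 0 < b := ha.trans hab
  have hb1 : 0 < 1 - b := by linarith
  have hφc : ContinuousOn φ (Set.Ioi 0) := hφ.continuousOn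
  have hφdOn : DifferentiableOn ℝ φ (Set.Ioi 0) := hφ.differentiableOn (by simp)
  have hφdAt : ∀ t : ℝ, 0 < t → DifferentiableAt ℝ φ t := fun t ht =>
    (hφdOn t ht).differentiableAt (isOpen_Ioi.mem_nhds ht)
  -- nonnegativity of N₀, N₁
  have hN₀ : 0 ≤ N₀ := by
    have h := h0 1 one_pos
    simp [Real.one_rpow] at h
    exact le_trans (norm_nonneg _) h
  have hN₁ : 0 ≤ N₁ := by
    have h := h1 1 one_pos
    simp [Real.one_rpow] at h
    exact le_trans (norm_nonneg _) h
  -- pointwise bounds on φ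
  have hφ_le : ∀ t : ℝ, 0 < t → t ≤ 1 → ‖φ t‖ ≤ N₀ * t ^ (a - 1) := by
    intro t ht ht1
    have h := h0 t ht
    rw [if_pos ht1] at h
    have hw : t ^ (-a) * t = t ^ (1 - a) := by
      rw [show (1:ℝ) - a = -a + 1 by ring, Real.rpow_add ht, Real.rpow_one]
    rw [hw] at h
    have hpos : 0 < t ^ (1 - a) := Real.rpow_pos_of_pos ht _
    have h2 : ‖φ t‖ ≤ N₀ / t ^ (1 - a) := by
      rw [le_div_iff₀ hpos]; nlinarith [h]
    have h3 : N₀ / t ^ (1 - a) = N₀ * t ^ (a - 1) := by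
      rw [show a - 1 = -(1 - a) by ring, Real.rpow_neg ht.le, div_eq_mul_inv]
    rw [h3] at h2; exact h2
  have hφ_gt : ∀ t : ℝ, 1 < t → ‖φ t‖ ≤ N₀ * t ^ (b - 1) := by
    intro t ht1
    have ht : (0:ℝ) < t := lt_trans one_pos ht1
    have h := h0 t ht
    rw [if_neg (not_le.2 ht1)] at h
    have hw : t ^ (-b) * t = t ^ (1 - b) := by
      rw [show (1:ℝ) - b = -b + 1 by ring, Real.rpow_add ht, Real.rpow_one]
    rw [hw] at h
    have hpos : 0 < t ^ (1 - b) := Real.rpow_pos_of_pos ht _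
    have h2 : ‖φ t‖ ≤ N₀ / t ^ (1 - b) := by
      rw [le_div_iff₀ hpos]; nlinarith [h]
    have h3 : N₀ / t ^ (1 - b) = N₀ * t ^ (b - 1) := by
      rw [show b - 1 = -(1 - b) by ring, Real.rpow_neg ht.le, div_eq_mul_inv]
    rw [h3] at h2; exact h2
  -- derivative bound on [1/2, 3/2]
  have hderiv_le : ∀ t ∈ Set.Icc (1/2:ℝ) (3/2), ‖deriv φ t‖ ≤ 4 * N₁ := by
    intro t ht
    obtain ⟨ht1, ht2⟩ := ht
    have ht : (0:ℝ) < t := by linarith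
    have h := h1 t ht
    have habs : (0:ℝ) ≤ ‖deriv φ t‖ := norm_nonneg _
    have hw : (1/4 : ℝ) ≤ (if t ≤ 1 then t ^ (-a) else t ^ (-b)) * t ^ (2:ℕ) := by
      split_ifs with hle
      · have h1a : (1:ℝ) ≤ t ^ (-a) :=
          Real.one_le_rpow_of_pos_of_le_one_of_nonpos ht hle (by linarith)
        have ht2 : (1/4:ℝ) ≤ t ^ (2:ℕ) := by nlinarith
        nlinarith [Real.rpow_pos_of_pos ht (-a)]
      · push_neg at hle
        have h1b : (2/3:ℝ) ≤ t ^ (-b) := by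
          have hle1 : t ^ (-1:ℝ) ≤ t ^ (-b) :=
            Real.rpow_le_rpow_of_exponent_le hle.le (by linarith)
          rw [Real.rpow_neg_one] at hle1
          have : (2/3:ℝ) ≤ t⁻¹ := by
            rw [show (2/3:ℝ) = (3/2:ℝ)⁻¹ by norm_num]
            exact inv_anti₀ ht ht2
          linarith
        have ht2 : (1:ℝ) ≤ t ^ (2:ℕ) := by nlinarith
        nlinarith [Real.rpow_pos_of_pos ht (-b)]
    nlinarith [mul_le_mul_of_nonneg_right hw habs]
  -- MVT bound
  have hsub : ∀ t ∈ Set.Icc (1/2:ℝ) (3/2), ‖φ t - φ 1‖ ≤ 4 * N₁ * |t - 1| := by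
    intro t ht
    have h1mem : (1:ℝ) ∈ Set.Icc (1/2:ℝ) (3/2) := by constructor <;> norm_num
    have := Convex.norm_image_sub_le_of_norm_deriv_le
      (f := φ) (s := Set.Icc (1/2:ℝ) (3/2))
      (fun x hx => hφdAt x (by have := hx.1; linarith))
      hderiv_le (convex_Icc _ _) h1mem ht
    simpa [Real.norm_eq_abs] using this
  -- bound on ψ
  have hψb : ∀ t ∈ Set.Ioo (1/2:ℝ) (3/2), ‖(φ t - φ 1) / ((t:ℂ) - 1)‖ ≤ 4 * N₁ := by
    intro t ht
    rcases eq_or_ne t 1 with rfl | htne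
    · simp; positivity
    · have h := hsub t (Set.Ioo_subset_Icc_self ht)
      have htR : |t - 1| ≠ 0 := abs_ne_zero.2 (sub_ne_zero.2 htne)
      have habs : ‖(t:ℂ) - 1‖ = |t - 1| := by
        rw [show ((t:ℂ) - 1) = ((t - 1 : ℝ) : ℂ) by push_cast; ring, Complex.norm_real,
          Real.norm_eq_abs]
      rw [norm_div, habs, div_le_iff₀ (lt_of_le_of_ne (abs_nonneg _) (Ne.symm htR))]
      exact h
  -- integrability near 0
  have hcont0 : ContinuousOn (fun t : ℝ => φ t / (1 - (t:ℂ))) (Set.Ioo (0:ℝ) (1/2)) := by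
    apply ContinuousOn.div
    · exact hφc.mono (fun x hx => hx.1)
    · exact (continuous_const.sub Complex.continuous_ofReal).continuousOn
    · intro t ht
      have : (t:ℝ) ≠ 1 := by have := ht.2; intro h; rw [h] at this; norm_num at this
      exact sub_ne_zero.2 (fun h => this (by exact_mod_cast h.symm))
  have hgint : IntegrableOn (fun t : ℝ => 2 * N₀ * t ^ (a - 1)) (Set.Ioo (0:ℝ) (1/2)) := by
    have h := (intervalIntegral.intervalIntegrable_rpow' (a := 0) (b := 1/2)
      (by linarith : (-1:ℝ) < a - 1))
    rw [intervalIntegrable_iff_integrableOn_Ioc_of_le (by norm_num)] at h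
    exact ((h.mono_set Set.Ioo_subset_Ioc_self).const_mul (2 * N₀))
  have hb0' : ∀ t ∈ Set.Ioo (0:ℝ) (1/2), ‖φ t / (1 - (t:ℂ))‖ ≤ 2 * N₀ * t ^ (a - 1) := by
    intro t ht
    obtain ⟨ht0, ht2⟩ := ht
    have habs : ‖(1:ℂ) - (t:ℂ)‖ = 1 - t := by
      rw [show ((1:ℂ) - (t:ℂ)) = ((1 - t : ℝ) : ℂ) by push_cast; ring, Complex.norm_real,
        Real.norm_eq_abs, abs_of_pos (by linarith)]
    rw [norm_div, habs]
    have h1 : ‖φ t‖ ≤ N₀ * t ^ (a - 1) := by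
      exact hφ_le t ht0 (by linarith)
    have h2 : ‖φ t‖ / (1 - t) ≤ (N₀ * t ^ (a - 1)) / (1/2) := by
      apply div_le_div₀ (by positivity) h1 (by norm_num) (by linarith)
    calc ‖φ t‖ / (1 - t) ≤ (N₀ * t ^ (a - 1)) / (1/2) := h2
      _ = 2 * N₀ * t ^ (a - 1) := by ring
  have hint0 : IntegrableOn (fun t : ℝ => φ t / (1 - (t:ℂ))) (Set.Ioo (0:ℝ) (1/2)) := by
    apply Integrable.mono' hgint (hcont0.aestronglyMeasurable measurableSet_Ioo)
    filter_upwards [ae_restrict_mem measurableSet_Ioo] with t ht using hb0' t ht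
  -- integrability near ∞
  have hcontinf : ContinuousOn (fun t : ℝ => φ t / (1 - (t:ℂ))) (Set.Ioi (3/2:ℝ)) := by
    apply ContinuousOn.div
    · exact hφc.mono (fun x hx => by simp only [Set.mem_Ioi] at *; linarith)
    · exact (continuous_const.sub Complex.continuous_ofReal).continuousOn
    · intro t ht
      have : (t:ℝ) ≠ 1 := by
        simp only [Set.mem_Ioi] at ht; intro h; rw [h] at ht; norm_num at ht
      exact sub_ne_zero.2 (fun h => this (by exact_mod_cast h.symm))
  have hgintinf : IntegrableOn (fun t : ℝ => 3 * N₀ * t ^ (b - 2)) (Set.Ioi (3/2:ℝ)) :=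
    (integrableOn_Ioi_rpow_of_lt (by linarith) (by norm_num : (0:ℝ) < 3/2)).const_mul _
  have hbinf' : ∀ t ∈ Set.Ioi (3/2:ℝ), ‖φ t / (1 - (t:ℂ))‖ ≤ 3 * N₀ * t ^ (b - 2) := by
    intro t ht
    simp only [Set.mem_Ioi] at ht
    have ht0 : (0:ℝ) < t := by linarith
    have habs : ‖(1:ℂ) - (t:ℂ)‖ = t - 1 := by
      rw [show ((1:ℂ) - (t:ℂ)) = ((1 - t : ℝ) : ℂ) by push_cast; ring, Complex.norm_real,
        Real.norm_eq_abs, abs_of_neg (by linarith), neg_sub]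
    rw [norm_div, habs]
    have h1 : ‖φ t‖ ≤ N₀ * t ^ (b - 1) := by
      exact hφ_gt t (by linarith)
    have h2 : ‖φ t‖ / (t - 1) ≤ (N₀ * t ^ (b - 1)) / (t/3) := by
      apply div_le_div₀ (by positivity) h1 (by linarith) (by linarith)
    calc ‖φ t‖ / (t - 1) ≤ (N₀ * t ^ (b - 1)) / (t/3) := h2
      _ = 3 * N₀ * (t ^ (b - 1) / t) := by ring
      _ = 3 * N₀ * t ^ (b - 2) := by
          have h3 : t ^ (b - 2) = t ^ (b - 1) / t := by
            rw [show b - 2 = (b - 1) - 1 by ring]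
            exact Real.rpow_sub_one (ne_of_gt ht0) _
          rw [h3]
  have hintinf : IntegrableOn (fun t : ℝ => φ t / (1 - (t:ℂ))) (Set.Ioi (3/2:ℝ)) := by
    apply Integrable.mono' hgintinf (hcontinf.aestronglyMeasurable measurableSet_Ioi)
    filter_upwards [ae_restrict_mem measurableSet_Ioi] with t ht using hbinf' t ht
  -- measurability & integrability of ψ on the middle interval
  have hψmeas : AEStronglyMeasurable (fun t : ℝ => (φ t - φ 1) / ((t:ℂ) - 1))
      (volume.restrict (Set.Ioo (1/2:ℝ) (3/2))) := by
    have hrestr : volume.restrict (Set.Ioo (1/2:ℝ) (3/2))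
        = volume.restrict (Set.Ioo (1/2:ℝ) (3/2) \ {1}) := by
      refine (Measure.restrict_congr_set ?_).symm
      exact MeasureTheory.diff_ae_eq_self.2
        (measure_mono_null Set.inter_subset_right (measure_singleton 1))
    have hcont : ContinuousOn (fun t : ℝ => (φ t - φ 1) / ((t:ℂ) - 1))
        (Set.Ioo (1/2:ℝ) (3/2) \ {1}) := by
      apply ContinuousOn.div
      · exact (hφc.mono (fun x hx => by
          have := hx.1.1; simp only [Set.mem_Ioi]; linarith)).sub continuousOn_const
      · exact (Complex.continuous_ofReal.sub continuous_const).continuousOn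
      · intro t ht
        exact sub_ne_zero.2 (fun h => ht.2 (by exact_mod_cast h))
    rw [hrestr]
    exact hcont.aestronglyMeasurable (measurableSet_Ioo.diff (measurableSet_singleton 1))
  have hψint : IntegrableOn (fun t : ℝ => (φ t - φ 1) / ((t:ℂ) - 1))
      (Set.Ioo (1/2:ℝ) (3/2)) := by
    apply Integrable.mono' (g := fun _ => 4 * N₁)
      (integrableOn_const measure_Ioo_lt_top.ne) hψmeas
    filter_upwards [ae_restrict_mem measurableSet_Ioo] with t ht using hψb t ht
  -- auxiliary non-vanishing and continuity facts
  have hne1 : ∀ t : ℝ, t ≠ 1 → (1:ℂ) - (t:ℂ) ≠ 0 := by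
    intro t ht h
    exact ht (by exact_mod_cast (sub_eq_zero.1 h).symm)
  have hne1' : ∀ t : ℝ, t ≠ 1 → (t:ℂ) - 1 ≠ 0 := by
    intro t ht h
    exact ht (by exact_mod_cast (sub_eq_zero.1 h))
  have hcontf : ContinuousOn (fun t : ℝ => φ t / (1 - (t:ℂ))) (Set.Ioi 0 \ {1}) := by
    apply ContinuousOn.div
    · exact hφc.mono (fun x hx => hx.1)
    · exact (continuous_const.sub Complex.continuous_ofReal).continuousOn
    · exact fun t ht => hne1 t ht.2
  have hcontk : ∀ t : ℝ, t ≠ 1 → ContinuousAt (fun t : ℝ => (1 - (t:ℂ))⁻¹) t := by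
    intro t ht
    exact ((continuous_const.sub Complex.continuous_ofReal).continuousAt).inv₀ (hne1 t ht)
  -- key algebraic identity
  have key : ∀ ε : ℝ, ε ∈ Set.Ioo (0:ℝ) (1/2) →
      ((∫ t in Set.Ioo (0:ℝ) (1 - ε), φ t / (1 - (t:ℂ)))
          + ∫ t in Set.Ioi (1 + ε), φ t / (1 - (t:ℂ)))
        = (((∫ t in Set.Ioo (0:ℝ) (1/2), φ t / (1 - (t:ℂ)))
              + ∫ t in Set.Ioi (3/2 : ℝ), φ t / (1 - (t:ℂ)))
            - ∫ t in Set.Ioo (1/2 : ℝ) (3/2), (φ t - φ 1) / ((t:ℂ) - 1))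
          + ∫ t in Set.Ico (1-ε) (1+ε), (φ t - φ 1) / ((t:ℂ) - 1) := by
    intro ε hε
    obtain ⟨hε0, hε2⟩ := hε
    have hl1 : (1/2:ℝ) < 1 - ε := by linarith
    have hr1 : (1:ℝ) + ε < 3/2 := by linarith
    have hfIco : IntegrableOn (fun t : ℝ => φ t / (1 - (t:ℂ))) (Set.Ico (1/2:ℝ) (1-ε)) := by
      apply ((hcontf.mono ?_).integrableOn_Icc).mono_set Set.Ico_subset_Icc_self
      intro x hx
      exact ⟨by have := hx.1; simp only [Set.mem_Ioi]; linarith,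
        by simp only [Set.mem_singleton_iff]; have := hx.2; intro h; rw [h] at this; linarith⟩
    have hfIoc : IntegrableOn (fun t : ℝ => φ t / (1 - (t:ℂ))) (Set.Ioc (1+ε) (3/2:ℝ)) := by
      apply ((hcontf.mono ?_).integrableOn_Icc).mono_set Set.Ioc_subset_Icc_self
      intro x hx
      exact ⟨by have := hx.1; simp only [Set.mem_Ioi]; linarith,
        by simp only [Set.mem_singleton_iff]; have := hx.1; intro h; rw [h] at this; linarith⟩
    have split1 : (∫ t in Set.Ioo (0:ℝ) (1 - ε), φ t / (1 - (t:ℂ)))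
        = (∫ t in Set.Ioo (0:ℝ) (1/2), φ t / (1 - (t:ℂ)))
          + ∫ t in Set.Ico (1/2:ℝ) (1-ε), φ t / (1 - (t:ℂ)) := by
      rw [← setIntegral_union (Set.disjoint_left.2 fun x hx hx' => absurd hx.2 (not_lt.2 hx'.1))
        measurableSet_Ico hint0 hfIco,
        Set.Ioo_union_Ico_eq_Ioo (by norm_num) hl1.le]
    have split2 : (∫ t in Set.Ioi (1 + ε), φ t / (1 - (t:ℂ)))
        = (∫ t in Set.Ioc (1+ε) (3/2:ℝ), φ t / (1 - (t:ℂ)))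
          + ∫ t in Set.Ioi (3/2:ℝ), φ t / (1 - (t:ℂ)) := by
      rw [← setIntegral_union (Set.Ioc_disjoint_Ioi le_rfl)
        measurableSet_Ioi hfIoc hintinf,
        Set.Ioc_union_Ioi_eq_Ioi hr1.le]
    have midL : (∫ t in Set.Ico (1/2:ℝ) (1-ε), φ t / (1 - (t:ℂ)))
        = ∫ t in Set.Ioo (1/2:ℝ) (1-ε), φ t / (1 - (t:ℂ)) := integral_Ico_eq_integral_Ioo
    have midR : (∫ t in Set.Ioc (1+ε) (3/2:ℝ), φ t / (1 - (t:ℂ)))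
        = ∫ t in Set.Ioo (1+ε) (3/2:ℝ), φ t / (1 - (t:ℂ)) := integral_Ioc_eq_integral_Ioo
    have hψL : IntegrableOn (fun t : ℝ => (φ t - φ 1) / ((t:ℂ) - 1)) (Set.Ioo (1/2:ℝ) (1-ε)) :=
      hψint.mono_set (Set.Ioo_subset_Ioo le_rfl (by linarith))
    have hψR : IntegrableOn (fun t : ℝ => (φ t - φ 1) / ((t:ℂ) - 1)) (Set.Ioo (1+ε) (3/2:ℝ)) :=
      hψint.mono_set (Set.Ioo_subset_Ioo (by linarith) le_rfl)
    have hkL : IntegrableOn (fun t : ℝ => (1 - (t:ℂ))⁻¹) (Set.Ioo (1/2:ℝ) (1-ε)) := by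
      apply (ContinuousOn.integrableOn_Icc ?_).mono_set Set.Ioo_subset_Icc_self
      intro x hx
      exact (hcontk x (by
        have h1 := hx.1; have h2 := hx.2; intro h; rw [h] at h2; linarith)).continuousWithinAt
    have hkR : IntegrableOn (fun t : ℝ => (1 - (t:ℂ))⁻¹) (Set.Ioo (1+ε) (3/2:ℝ)) := by
      apply (ContinuousOn.integrableOn_Icc ?_).mono_set Set.Ioo_subset_Icc_self
      intro x hx
      exact (hcontk x (by
        have h1 := hx.1; intro h; rw [h] at h1; linarith)).continuousWithinAt
    have identL : (∫ t in Set.Ioo (1/2:ℝ) (1-ε), φ t / (1 - (t:ℂ)))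
        = φ 1 * (∫ t in Set.Ioo (1/2:ℝ) (1-ε), (1 - (t:ℂ))⁻¹)
          - ∫ t in Set.Ioo (1/2:ℝ) (1-ε), (φ t - φ 1) / ((t:ℂ) - 1) := by
      rw [← integral_const_mul, ← integral_sub (hkL.const_mul _) hψL]
      apply setIntegral_congr_fun measurableSet_Ioo
      intro t ht
      have htne : t ≠ 1 := by have := ht.2; intro h; rw [h] at this; linarith
      have h1 := hne1 t htne
      have h2 := hne1' t htne
      field_simp
      ring
    have identR : (∫ t in Set.Ioo (1+ε) (3/2:ℝ), φ t / (1 - (t:ℂ)))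
        = φ 1 * (∫ t in Set.Ioo (1+ε) (3/2:ℝ), (1 - (t:ℂ))⁻¹)
          - ∫ t in Set.Ioo (1+ε) (3/2:ℝ), (φ t - φ 1) / ((t:ℂ) - 1) := by
      rw [← integral_const_mul, ← integral_sub (hkR.const_mul _) hψR]
      apply setIntegral_congr_fun measurableSet_Ioo
      intro t ht
      have htne : t ≠ 1 := by have := ht.1; intro h; rw [h] at this; linarith
      have h1 := hne1 t htne
      have h2 := hne1' t htne
      field_simp
      ring
    have hlog : ∀ c d : ℝ, c ≤ d → (∀ t ∈ Set.uIcc c d, t ≠ 1) →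
        (∫ t in Set.Ioo c d, (1 - (t:ℂ))⁻¹)
          = Complex.ofReal (-Real.log (1 - d) + Real.log (1 - c)) := by
      intro c d hcd hne
      rw [← integral_Ioc_eq_integral_Ioo, ← intervalIntegral.integral_of_le hcd]
      have hcast : (∫ t in c..d, (1 - (t:ℂ))⁻¹) = ∫ t in c..d, (((1 - t)⁻¹ : ℝ) : ℂ) := by
        apply intervalIntegral.integral_congr
        intro t _
        push_cast
        ring
      rw [hcast, intervalIntegral.integral_ofReal]
      congr 1
      have hF : ∀ t ∈ Set.uIcc c d,
          HasDerivAt (fun t : ℝ => -Real.log (1 - t)) ((1 - t)⁻¹) t := by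
        intro t ht
        have hne' : (1:ℝ) - t ≠ 0 := sub_ne_zero.2 (Ne.symm (hne t ht))
        have h1 : HasDerivAt (fun t : ℝ => 1 - t) (-1) t := (hasDerivAt_id t).const_sub 1
        have h2 := (h1.log hne').neg
        have h3 : HasDerivAt (fun t : ℝ => -Real.log (1 - t)) (-(-1 / (1 - t))) t := h2
        rwa [neg_div, neg_neg, one_div] at h3
      have hki : IntervalIntegrable (fun t : ℝ => (1 - t)⁻¹) volume c d := by
        apply ContinuousOn.intervalIntegrable
        intro t ht
        exact ((continuous_const.sub continuous_id).continuousAt.inv₀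
          (sub_ne_zero.2 (Ne.symm (hne t ht)))).continuousWithinAt
      rw [intervalIntegral.integral_eq_sub_of_hasDerivAt hF hki]
      ring
    have kval : (∫ t in Set.Ioo (1/2:ℝ) (1-ε), (1 - (t:ℂ))⁻¹)
        + (∫ t in Set.Ioo (1+ε) (3/2:ℝ), (1 - (t:ℂ))⁻¹) = 0 := by
      rw [hlog (1/2) (1-ε) hl1.le (by
          intro t ht
          rw [Set.uIcc_of_le hl1.le] at ht
          have := ht.2; intro h; rw [h] at this; linarith),
        hlog (1+ε) (3/2) hr1.le (by
          intro t ht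
          rw [Set.uIcc_of_le hr1.le] at ht
          have := ht.1; intro h; rw [h] at this; linarith)]
      rw [show (1:ℝ) - (1 - ε) = ε by ring, show (1:ℝ) - (1 + ε) = -ε by ring,
        show (1:ℝ) - 3/2 = -(1/2) by norm_num, Real.log_neg_eq_log, Real.log_neg_eq_log]
      push_cast
      ring
    have hψE : IntegrableOn (fun t : ℝ => (φ t - φ 1) / ((t:ℂ) - 1)) (Set.Ico (1-ε) (1+ε)) :=
      hψint.mono_set (fun x hx => ⟨by have := hx.1; linarith, by have := hx.2; linarith⟩)
    have hψR' : IntegrableOn (fun t : ℝ => (φ t - φ 1) / ((t:ℂ) - 1))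
        (Set.Ico (1+ε) (3/2:ℝ)) :=
      hψint.mono_set (fun x hx => ⟨by have := hx.1; linarith, by have := hx.2; linarith⟩)
    have hψM : IntegrableOn (fun t : ℝ => (φ t - φ 1) / ((t:ℂ) - 1))
        (Set.Ico (1-ε) (3/2:ℝ)) :=
      hψint.mono_set (fun x hx => ⟨by have := hx.1; linarith, by have := hx.2; linarith⟩)
    have ψsplit : (∫ t in Set.Ioo (1/2:ℝ) (3/2), (φ t - φ 1) / ((t:ℂ) - 1))
        = (∫ t in Set.Ioo (1/2:ℝ) (1-ε), (φ t - φ 1) / ((t:ℂ) - 1))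
          + ((∫ t in Set.Ico (1-ε) (1+ε), (φ t - φ 1) / ((t:ℂ) - 1))
            + ∫ t in Set.Ioo (1+ε) (3/2:ℝ), (φ t - φ 1) / ((t:ℂ) - 1)) := by
      rw [← Set.Ioo_union_Ico_eq_Ioo hl1 (by linarith : 1 - ε ≤ 3/2),
        setIntegral_union (Set.disjoint_left.2 fun x hx hx' => absurd hx.2 (not_lt.2 hx'.1))
          measurableSet_Ico hψL hψM]
      congr 1
      rw [← Set.Ico_union_Ico_eq_Ico (by linarith : 1 - ε ≤ 1 + ε) hr1.le,
        setIntegral_union (Set.disjoint_left.2 fun x hx hx' => absurd hx.2 (not_lt.2 hx'.1))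
          measurableSet_Ico hψE hψR']
      congr 1
      exact integral_Ico_eq_integral_Ioo
    rw [split1, split2, midL, midR, identL, identR, ψsplit]
    linear_combination (φ 1) * kval
  constructor
  · -- Tendsto part
    have hmemIoo : Set.Ioo (0:ℝ) (1/2) ∈ nhdsWithin (0:ℝ) (Set.Ioi 0) :=
      Ioo_mem_nhdsGT_of_mem ⟨le_refl 0, by norm_num⟩
    have hE : Tendsto (fun ε : ℝ => ∫ t in Set.Ico (1-ε) (1+ε), (φ t - φ 1) / ((t:ℂ) - 1))
        (nhdsWithin 0 (Set.Ioi 0)) (nhds 0) := by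
      apply squeeze_zero_norm'
      · filter_upwards [hmemIoo] with ε hε
        have hsub' : Set.Ico (1-ε) (1+ε) ⊆ Set.Ioo (1/2:ℝ) (3/2) := by
          intro x hx
          exact ⟨by have := hx.1; have := hε.2; simp only [Set.mem_Ioo] at *; linarith,
            by have := hx.2; have := hε.2; simp only [Set.mem_Ioo] at *; linarith⟩
        have hmeasure : (volume (Set.Ico (1-ε) (1+ε))).toReal = 2 * ε := by
          rw [Real.volume_Ico, ENNReal.toReal_ofReal (by linarith [hε.1])]
          ring
        calc ‖∫ t in Set.Ico (1-ε) (1+ε), (φ t - φ 1) / ((t:ℂ) - 1)‖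
            ≤ (4 * N₁) * (volume (Set.Ico (1-ε) (1+ε))).toReal := by
              apply norm_setIntegral_le_of_norm_le_const (by
                rw [Real.volume_Ico]; exact ENNReal.ofReal_lt_top)
              intro x hx
              exact hψb x (hsub' hx)
          _ = 8 * N₁ * ε := by rw [hmeasure]; ring
      · have : Tendsto (fun ε : ℝ => 8 * N₁ * ε) (nhdsWithin 0 (Set.Ioi 0))
            (nhds (8 * N₁ * 0)) :=
          ((continuous_const.mul continuous_id).tendsto 0).mono_left nhdsWithin_le_nhds
        simpa using this
    have h2 : Tendsto (fun ε : ℝ =>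
        (((∫ t in Set.Ioo (0:ℝ) (1/2), φ t / (1 - (t:ℂ)))
              + ∫ t in Set.Ioi (3/2 : ℝ), φ t / (1 - (t:ℂ)))
            - ∫ t in Set.Ioo (1/2 : ℝ) (3/2), (φ t - φ 1) / ((t:ℂ) - 1))
          + ∫ t in Set.Ico (1-ε) (1+ε), (φ t - φ 1) / ((t:ℂ) - 1))
        (nhdsWithin 0 (Set.Ioi 0))
        (nhds (((∫ t in Set.Ioo (0:ℝ) (1/2), φ t / (1 - (t:ℂ)))
              + ∫ t in Set.Ioi (3/2 : ℝ), φ t / (1 - (t:ℂ)))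
            - ∫ t in Set.Ioo (1/2 : ℝ) (3/2), (φ t - φ 1) / ((t:ℂ) - 1))) := by
      simpa using hE.const_add (((∫ t in Set.Ioo (0:ℝ) (1/2), φ t / (1 - (t:ℂ)))
              + ∫ t in Set.Ioi (3/2 : ℝ), φ t / (1 - (t:ℂ)))
            - ∫ t in Set.Ioo (1/2 : ℝ) (3/2), (φ t - φ 1) / ((t:ℂ) - 1))
    apply h2.congr'
    filter_upwards [hmemIoo] with ε hε
    exact (key ε hε).symm
  · -- bound part
    have hP : ‖∫ t in Set.Ioo (0:ℝ) (1/2), φ t / (1 - (t:ℂ))‖ ≤ (2/a) * N₀ := by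
      have h1 : ‖∫ t in Set.Ioo (0:ℝ) (1/2), φ t / (1 - (t:ℂ))‖
          ≤ ∫ t in Set.Ioo (0:ℝ) (1/2), 2 * N₀ * t ^ (a - 1) := by
        apply norm_integral_le_of_norm_le hgint
        filter_upwards [ae_restrict_mem measurableSet_Ioo] with t ht using hb0' t ht
      have h2 : (∫ t in Set.Ioo (0:ℝ) (1/2), 2 * N₀ * t ^ (a - 1))
          = 2 * N₀ * ((1/2:ℝ) ^ a / a) := by
        rw [integral_const_mul, ← integral_Ioc_eq_integral_Ioo,
          ← intervalIntegral.integral_of_le (by norm_num : (0:ℝ) ≤ 1/2),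
          integral_rpow (Or.inl (by linarith))]
        rw [show a - 1 + 1 = a by ring, Real.zero_rpow (ne_of_gt ha)]
        ring
      have h4 : ((1/2:ℝ) ^ a) ≤ 1 := Real.rpow_le_one (by norm_num) (by norm_num) ha.le
      have h5 : (0:ℝ) < (1/2:ℝ) ^ a := Real.rpow_pos_of_pos (by norm_num) _
      have h3 : 2 * N₀ * ((1/2:ℝ) ^ a / a) ≤ (2/a) * N₀ := by
        rw [show 2 * N₀ * ((1/2:ℝ)^a/a) = (2 * N₀ * (1/2:ℝ)^a)/a by ring,
          show (2/a) * N₀ = (2*N₀)/a by ring]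
        rw [div_le_div_iff₀ (by positivity) (by positivity)]
        nlinarith [mul_le_mul_of_nonneg_right (mul_le_mul_of_nonneg_left h4 hN₀) ha.le]
      linarith [h1, h2 ▸ h1]
    have hQ : ‖∫ t in Set.Ioi (3/2:ℝ), φ t / (1 - (t:ℂ))‖ ≤ (3/(1-b)) * N₀ := by
      have h1 : ‖∫ t in Set.Ioi (3/2:ℝ), φ t / (1 - (t:ℂ))‖
          ≤ ∫ t in Set.Ioi (3/2:ℝ), 3 * N₀ * t ^ (b - 2) := by
        apply norm_integral_le_of_norm_le hgintinf
        filter_upwards [ae_restrict_mem measurableSet_Ioi] with t ht using hbinf' t ht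
      have h2 : (∫ t in Set.Ioi (3/2:ℝ), 3 * N₀ * t ^ (b - 2))
          = 3 * N₀ * ((3/2:ℝ) ^ (b-1) / (1 - b)) := by
        rw [integral_const_mul, integral_Ioi_rpow_of_lt (by linarith) (by norm_num : (0:ℝ) < 3/2)]
        rw [show b - 2 + 1 = b - 1 by ring]
        rw [show -(3/2:ℝ) ^ (b-1) / (b-1) = (3/2:ℝ) ^ (b-1) / (1-b) by
          rw [div_eq_div_iff (by linarith) (by linarith)]; ring]
      have h4 : ((3/2:ℝ) ^ (b-1)) ≤ 1 :=
        Real.rpow_le_one_of_one_le_of_nonpos (by norm_num) (by linarith)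
      have h5 : (0:ℝ) < (3/2:ℝ) ^ (b-1) := Real.rpow_pos_of_pos (by norm_num) _
      have h3 : 3 * N₀ * ((3/2:ℝ) ^ (b-1) / (1 - b)) ≤ (3/(1-b)) * N₀ := by
        rw [show 3 * N₀ * ((3/2:ℝ)^(b-1)/(1-b)) = (3 * N₀ * (3/2:ℝ)^(b-1))/(1-b) by ring,
          show (3/(1-b)) * N₀ = (3*N₀)/(1-b) by ring]
        rw [div_le_div_iff₀ (by positivity) (by positivity)]
        nlinarith [mul_le_mul_of_nonneg_right (mul_le_mul_of_nonneg_left h4 hN₀) hb1.le]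
      linarith [h1, h2 ▸ h1]
    have hR : ‖∫ t in Set.Ioo (1/2:ℝ) (3/2), (φ t - φ 1) / ((t:ℂ) - 1)‖ ≤ 4 * N₁ := by
      have h1 : ‖∫ t in Set.Ioo (1/2:ℝ) (3/2), (φ t - φ 1) / ((t:ℂ) - 1)‖
          ≤ (4 * N₁) * (volume (Set.Ioo (1/2:ℝ) (3/2))).toReal := by
        apply norm_setIntegral_le_of_norm_le_const (by
          rw [Real.volume_Ioo]; exact ENNReal.ofReal_lt_top) hψb
      have h2 : (volume (Set.Ioo (1/2:ℝ) (3/2))).toReal = 1 := by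
        rw [Real.volume_Ioo, ENNReal.toReal_ofReal (by norm_num)]; norm_num
      rw [h2, mul_one] at h1
      exact h1
    have htri : ‖(((∫ t in Set.Ioo (0:ℝ) (1/2), φ t / (1 - (t:ℂ)))
              + ∫ t in Set.Ioi (3/2 : ℝ), φ t / (1 - (t:ℂ)))
            - ∫ t in Set.Ioo (1/2 : ℝ) (3/2), (φ t - φ 1) / ((t:ℂ) - 1))‖
        ≤ ‖∫ t in Set.Ioo (0:ℝ) (1/2), φ t / (1 - (t:ℂ))‖
          + ‖∫ t in Set.Ioi (3/2 : ℝ), φ t / (1 - (t:ℂ))‖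
          + ‖∫ t in Set.Ioo (1/2 : ℝ) (3/2), (φ t - φ 1) / ((t:ℂ) - 1)‖ := by
      calc _ ≤ ‖(∫ t in Set.Ioo (0:ℝ) (1/2), φ t / (1 - (t:ℂ)))
              + ∫ t in Set.Ioi (3/2 : ℝ), φ t / (1 - (t:ℂ))‖
            + ‖∫ t in Set.Ioo (1/2 : ℝ) (3/2), (φ t - φ 1) / ((t:ℂ) - 1)‖ := norm_sub_le _ _
        _ ≤ _ := by gcongr; exact norm_add_le _ _
    have h2a : (0:ℝ) < 2/a := by positivity
    have h3b : (0:ℝ) < 3/(1-b) := by positivity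
    nlinarith [htri, hP, hQ, hR, mul_nonneg hN₀ h2a.le, mul_nonneg hN₀ h3b.le,
      mul_nonneg hN₁ h2a.le, mul_nonneg hN₁ h3b.le]
end

section
/- Let 0 < α < 1/2 < β < 1, let f : {s ∈ ℂ : α < Re(s) < β} → ℂ be holomorphic with |f(s)| ≤ C|s|^m for some C > 0 and m ∈ ℕ, and fix α < c₋ < 1/2 < c₊ < β. Define ρ̄_±(t) = -(2πi)^{-1} ∫_{c_± - i∞}^{c_± + i∞} s^{-m-2} tan(πs) f(s) t^{-s} ds for t > 0. Then ρ̄_+(t) = (2^{m+2}/π)·f(1/2)·t^{-1/2} + ρ̄_-(t) for all t > 0. -/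
/-!
Write the integrand as `g s = Φ s / (s - 1/2)`, where
`Φ s = s^(-m-2) sin(πs) f(s) t^(-s) / ψ(s)` and `ψ` is the difference quotient of `cos(πs)`
at `1/2`; `ψ` has no zeros in `0 < Re s < 1` and `ψ(1/2) = -π`. Cauchy's integral formula on the
rectangle with vertical sides `Re s = c₋, c₊` and horizontal sides `Im s = ±T` gives
`2πi Φ(1/2)` for the boundary integral of `g`, for every `T > 0`. Since `|tan(πs)| ≤ 3` once
`|Im s| ≥ 1`, `g` is `O(|Im s|⁻²)` uniformly on the strip, so as `T → ∞` the horizontal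
sides vanish and the vertical sides converge to the two line integrals.
-/

open MeasureTheory

/-- The vertical-line integral `-(2πi)⁻¹ ∫_{c-i∞}^{c+i∞} s^{-m-2} tan(πs) f(s) t^{-s} ds`,
parametrized as `s = c + iy`, `ds = i dy`. -/
noncomputable def verticalRho (f : ℂ → ℂ) (m : ℕ) (c t : ℝ) : ℂ :=
  -(2 * (Real.pi : ℂ) * Complex.I)⁻¹ *
    (Complex.I * ∫ y : ℝ,
      ((c : ℂ) + y * Complex.I) ^ (-(m : ℂ) - 2)
        * Complex.tan ((Real.pi : ℂ) * ((c : ℂ) + y * Complex.I))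
        * f ((c : ℂ) + y * Complex.I)
        * (t : ℂ) ^ (-((c : ℂ) + y * Complex.I)))

open Complex Set Filter Topology intervalIntegral
open scoped Interval Real

section Rectangle

def rectBoundary (z w : ℂ) : Set ℂ :=
  [[z.re, w.re]] ×ℂ {z.im, w.im} ∪ {z.re, w.re} ×ℂ [[z.im, w.im]]

variable {z w : ℂ}

lemma horizontal_mem_rectBoundary {x y : ℝ} (hx : x ∈ [[z.re, w.re]])
    (hy : y = z.im ∨ y = w.im) : (x + y * I : ℂ) ∈ rectBoundary z w := by
  left; simp [mem_reProdIm, hx, hy]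

lemma vertical_mem_rectBoundary {x y : ℝ} (hx : x = z.re ∨ x = w.re)
    (hy : y ∈ [[z.im, w.im]]) : (x + y * I : ℂ) ∈ rectBoundary z w := by
  right; simp [mem_reProdIm, hx, hy]

lemma rectBoundary_subset : rectBoundary z w ⊆ [[z.re, w.re]] ×ℂ [[z.im, w.im]] := by
  rintro s (⟨hre, him⟩ | ⟨hre, him⟩)
  · obtain h | h : s.im = z.im ∨ s.im = w.im := him
    all_goals exact ⟨hre, by simp [h]⟩
  · obtain h | h : s.re = z.re ∨ s.re = w.re := hre
    all_goals exact ⟨by simp [h], him⟩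

lemma notMem_rectBoundary {p : ℂ} (hp : p ∈ Ioo z.re w.re ×ℂ Ioo z.im w.im) :
    p ∉ rectBoundary z w := by
  obtain ⟨⟨h1, h2⟩, h3, h4⟩ := hp
  rintro (⟨-, h | h⟩ | ⟨h | h, -⟩) <;> simp_all

variable {E : Type*} [NormedAddCommGroup E]

lemma ContinuousOn.intervalIntegrable_horizontal {f : ℂ → E}
    (hf : ContinuousOn f (rectBoundary z w)) {y : ℝ} (hy : y = z.im ∨ y = w.im) :
    IntervalIntegrable (fun x : ℝ ↦ f (x + y * I)) volume z.re w.re :=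
  (hf.comp (by fun_prop) fun _ hx ↦ horizontal_mem_rectBoundary hx hy).intervalIntegrable

lemma ContinuousOn.intervalIntegrable_vertical {f : ℂ → E}
    (hf : ContinuousOn f (rectBoundary z w)) {x : ℝ} (hx : x = z.re ∨ x = w.re) :
    IntervalIntegrable (fun y : ℝ ↦ f (x + y * I)) volume z.im w.im :=
  (hf.comp (by fun_prop) fun _ hy ↦ vertical_mem_rectBoundary hx hy).intervalIntegrable

variable [NormedSpace ℂ E]

/-- The boundary integral of `f` around the rectangle with opposite corners `z` and `w`, in the form
of `Complex.integral_boundary_rect_eq_zero_of_differentiableOn`; counterclockwise when `z` is the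
lower left corner. -/
noncomputable def rectIntegral (f : ℂ → E) (z w : ℂ) : E :=
  (∫ x : ℝ in z.re..w.re, f (x + z.im * I)) - (∫ x : ℝ in z.re..w.re, f (x + w.im * I)) +
    I • (∫ y : ℝ in z.im..w.im, f (w.re + y * I)) -
    I • ∫ y : ℝ in z.im..w.im, f (z.re + y * I)

lemma rectIntegral_congr {f g : ℂ → E} (h : EqOn f g (rectBoundary z w)) :
    rectIntegral f z w = rectIntegral g z w := by
  unfold rectIntegral
  rw [integral_congr fun x hx ↦ h (horizontal_mem_rectBoundary hx (.inl rfl)),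
    integral_congr fun x hx ↦ h (horizontal_mem_rectBoundary hx (.inr rfl)),
    integral_congr fun y hy ↦ h (vertical_mem_rectBoundary (.inr rfl) hy),
    integral_congr fun y hy ↦ h (vertical_mem_rectBoundary (.inl rfl) hy)]

lemma rectIntegral_add {f g : ℂ → E} (hf : ContinuousOn f (rectBoundary z w))
    (hg : ContinuousOn g (rectBoundary z w)) :
    rectIntegral (fun s ↦ f s + g s) z w = rectIntegral f z w + rectIntegral g z w := by
  simp only [rectIntegral]
  rw [integral_add (hf.intervalIntegrable_horizontal (.inl rfl))
      (hg.intervalIntegrable_horizontal (.inl rfl)),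
    integral_add (hf.intervalIntegrable_horizontal (.inr rfl))
      (hg.intervalIntegrable_horizontal (.inr rfl)),
    integral_add (hf.intervalIntegrable_vertical (.inr rfl))
      (hg.intervalIntegrable_vertical (.inr rfl)),
    integral_add (hf.intervalIntegrable_vertical (.inl rfl))
      (hg.intervalIntegrable_vertical (.inl rfl))]
  simp only [smul_add]
  abel

lemma rectIntegral_smul_const [CompleteSpace E] (c : ℂ → ℂ) (v : E) :
    rectIntegral (fun s ↦ c s • v) z w = rectIntegral c z w • v := by
  simp only [rectIntegral, intervalIntegral.integral_smul_const, sub_smul, add_smul,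
    smul_assoc]

end Rectangle

namespace Complex

lemma log_neg_of_im_pos {z : ℂ} (h : 0 < z.im) : log (-z) = log z - π * I := by
  rw [log, log, norm_neg, arg_neg_eq_arg_sub_pi_of_im_pos h]
  push_cast
  ring

lemma log_neg_of_im_neg {z : ℂ} (h : z.im < 0) : log (-z) = log z + π * I := by
  rw [log, log, norm_neg, arg_neg_eq_arg_add_pi_of_im_neg h]
  push_cast
  ring

lemma norm_tan_le_three_of_one_le_im {z : ℂ} (hz : 1 ≤ z.im) : ‖tan z‖ ≤ 3 := by
  set u := exp (2 * z * I)
  have hu : ‖u‖ ≤ 1 / 3 := by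
    have h3 : 3 ≤ Real.exp 2 := by linarith [Real.add_one_le_exp 2]
    rw [norm_exp, show (2 * z * I).re = -(2 * z.im) by simp, Real.exp_neg, one_div]
    exact inv_anti₀ (by norm_num) (h3.trans (Real.exp_le_exp.2 (by linarith)))
  have htan : tan z = I * (1 - u) / (1 + u) := by
    have hv : exp (z * I) ≠ 0 := exp_ne_zero _
    have hu' : u = exp (z * I) * exp (z * I) := by rw [← exp_add, ← two_mul, ← mul_assoc]
    rw [tan_eq_sin_div_cos, sin, cos, hu', neg_mul, exp_neg]
    field_simp
    ring
  have hnum : ‖1 - u‖ ≤ 1 + ‖u‖ := by simpa using norm_sub_le 1 u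
  have hden : 1 - ‖u‖ ≤ ‖1 + u‖ := by simpa using norm_sub_norm_le 1 (-u)
  rw [htan, norm_div, norm_mul, norm_I, one_mul, div_le_iff₀ (by linarith)]
  linarith

lemma norm_tan_le_three {z : ℂ} (hz : 1 ≤ |z.im|) : ‖tan z‖ ≤ 3 := by
  rcases le_abs'.1 hz with h | h
  · simpa [tan_neg] using norm_tan_le_three_of_one_le_im (z := -z) (by simp; linarith)
  · exact norm_tan_le_three_of_one_le_im h

lemma cpow_neg_natCast_sub_two (s : ℂ) (m : ℕ) : s ^ (-(m : ℂ) - 2) = (s ^ (m + 2))⁻¹ := by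
  rw [← cpow_natCast, ← cpow_neg]
  push_cast
  ring_nf

lemma cos_pi_mul_ne_zero {s : ℂ} (h0 : 0 < s.re) (h1 : s.re < 1) (hs : s ≠ 1 / 2) :
    cos (π * s) ≠ 0 := by
  intro h
  obtain ⟨k, hk⟩ := cos_eq_zero_iff.1 h
  have hsk : s = (2 * k + 1) / 2 := by
    have hπ : (π : ℂ) ≠ 0 := ofReal_ne_zero.2 Real.pi_ne_zero
    field_simp at hk ⊢
    linear_combination hk
  have hre : s.re = (2 * k + 1) / 2 := by simp [hsk]
  have hk0 : k = 0 := by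
    have : (-1 : ℝ) < k ∧ (k : ℝ) < 1 := by constructor <;> linarith
    norm_cast at this
    omega
  exact hs (by simp [hsk, hk0])

end Complex

lemma integral_sub_inv_horizontal {p : ℂ} {y : ℝ} (hy : y ≠ p.im) (a b : ℝ) :
    ∫ x : ℝ in a..b, ((x : ℂ) + y * I - p)⁻¹ =
      log (b + y * I - p) - log (a + y * I - p) := by
  have hslit (x : ℝ) : (x : ℂ) + y * I - p ∈ slitPlane :=
    mem_slitPlane_iff.2 (.inr (by simpa [sub_eq_zero] using hy))
  refine integral_eq_sub_of_hasDerivAt (f := fun x : ℝ ↦ log (x + y * I - p))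
    (fun x _ ↦ ?_) ?_
  · have := (((hasDerivAt_id (x : ℂ)).add_const (y * I)).sub_const p).clog (hslit x)
    simpa using this.comp_ofReal
  · exact Continuous.intervalIntegrable
      (Continuous.inv₀ (by fun_prop) fun x ↦ slitPlane_ne_zero (hslit x)) _ _

-- `ε = ±1` is chosen so that the segment `ε * (x + y * I - p)` avoids the branch cut of `log`.
lemma integral_sub_inv_vertical {p ε : ℂ} {x : ℝ}
    (hε : ∀ y : ℝ, ε * (x + y * I - p) ∈ slitPlane) (a b : ℝ) :
    ∫ y : ℝ in a..b, ((x : ℂ) + y * I - p)⁻¹ =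
      -I * (log (ε * (x + b * I - p)) - log (ε * (x + a * I - p))) := by
  have hε0 : ε ≠ 0 := left_ne_zero_of_mul (slitPlane_ne_zero (hε 0))
  have hne (y : ℝ) : (x : ℂ) + y * I - p ≠ 0 :=
    right_ne_zero_of_mul (slitPlane_ne_zero (hε y))
  rw [mul_sub]
  refine integral_eq_sub_of_hasDerivAt
    (f := fun y : ℝ ↦ -I * log (ε * (x + y * I - p))) (fun y _ ↦ ?_) ?_
  · have := (((hasDerivAt_id (y : ℂ)).mul_const I).const_add (x : ℂ)).sub_const p
      |>.const_mul ε |>.clog (hε y) |>.const_mul (-I)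
    simp only [id, one_mul] at this
    refine this.comp_ofReal.congr_deriv ?_
    rw [mul_div_mul_left _ _ hε0, ← mul_div_assoc, neg_mul, I_mul_I, neg_neg, one_div]
  · exact (Continuous.inv₀ (by fun_prop) hne).intervalIntegrable _ _

lemma rectIntegral_sub_inv {z w p : ℂ} (hp : p ∈ Ioo z.re w.re ×ℂ Ioo z.im w.im) :
    rectIntegral (fun s ↦ (s - p)⁻¹) z w = 2 * π * I := by
  obtain ⟨⟨hre_lo, hre_hi⟩, him_lo, him_hi⟩ := hp
  have hright (y : ℝ) : 1 * ((w.re : ℂ) + y * I - p) ∈ slitPlane :=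
    mem_slitPlane_iff.2 (.inl (by simpa using hre_hi))
  have hleft (y : ℝ) : -1 * ((z.re : ℂ) + y * I - p) ∈ slitPlane :=
    mem_slitPlane_iff.2 (.inl (by simpa using hre_lo))
  simp only [rectIntegral, smul_eq_mul]
  rw [integral_sub_inv_horizontal him_lo.ne, integral_sub_inv_horizontal him_hi.ne',
    integral_sub_inv_vertical hright, integral_sub_inv_vertical hleft]
  simp only [one_mul, neg_one_mul]
  rw [log_neg_of_im_pos (by simpa using him_hi), log_neg_of_im_neg (by simpa using him_lo)]
  ring_nf
  simp only [I_sq, I_pow_three]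
  ring

theorem rectIntegral_sub_inv_smul {E : Type*} [NormedAddCommGroup E] [NormedSpace ℂ E]
    [CompleteSpace E] {Φ : ℂ → E} {z w p : ℂ}
    (hΦ : DifferentiableOn ℂ Φ ([[z.re, w.re]] ×ℂ [[z.im, w.im]]))
    (hp : p ∈ Ioo z.re w.re ×ℂ Ioo z.im w.im) :
    rectIntegral (fun s ↦ (s - p)⁻¹ • Φ s) z w = (2 * π * I) • Φ p := by
  have hR : [[z.re, w.re]] ×ℂ [[z.im, w.im]] ∈ 𝓝 p :=
    mem_of_superset ((isOpen_Ioo.reProdIm isOpen_Ioo).mem_nhds hp)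
      (reProdIm_subset_iff.2 (prod_mono (Ioo_subset_Icc_self.trans Icc_subset_uIcc)
        (Ioo_subset_Icc_self.trans Icc_subset_uIcc)))
  have hslope : DifferentiableOn ℂ (dslope Φ p) ([[z.re, w.re]] ×ℂ [[z.im, w.im]]) :=
    (differentiableOn_dslope hR).2 hΦ
  have hpole : ContinuousOn (fun s : ℂ ↦ (s - p)⁻¹ • Φ p) (rectBoundary z w) :=
    ((continuousOn_id.sub continuousOn_const).inv₀ fun s hs ↦
      sub_ne_zero.2 (ne_of_mem_of_not_mem hs (notMem_rectBoundary hp))).smul continuousOn_const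
  have hsplit : EqOn (fun s ↦ (s - p)⁻¹ • Φ s)
      (fun s ↦ dslope Φ p s + (s - p)⁻¹ • Φ p) (rectBoundary z w) := fun s hs ↦ by
    dsimp only
    rw [dslope_of_ne _ (ne_of_mem_of_not_mem hs (notMem_rectBoundary hp)), slope, vsub_eq_sub,
      smul_sub, sub_add_cancel]
  have hgoursat : rectIntegral (dslope Φ p) z w = 0 :=
    integral_boundary_rect_eq_zero_of_differentiableOn _ z w hslope
  rw [rectIntegral_congr hsplit,
    rectIntegral_add (hslope.continuousOn.mono rectBoundary_subset) hpole,
    rectIntegral_smul_const, rectIntegral_sub_inv hp, hgoursat, zero_add]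

section Decay

variable {E : Type*} [NormedAddCommGroup E]

lemma tendsto_div_sq_cocompact (K : ℝ) :
    Tendsto (fun y : ℝ ↦ K / y ^ 2) (cocompact ℝ) (𝓝 0) := by
  have hsq : Tendsto (fun y : ℝ ↦ y ^ 2) (cocompact ℝ) atTop := by
    refine ((tendsto_pow_atTop two_ne_zero).comp tendsto_norm_cocompact_atTop).congr fun y ↦ ?_
    simp [Real.norm_eq_abs, sq_abs]
  simpa [div_eq_mul_inv] using hsq.inv_tendsto_atTop.const_mul K

lemma integrable_of_norm_le_div_sq {φ : ℝ → E} {K : ℝ} (hφ : Continuous φ)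
    (hdecay : ∀ᶠ y in cocompact ℝ, ‖φ y‖ ≤ K / y ^ 2) : Integrable φ := by
  refine hφ.locallyIntegrable.integrable_of_isBigO_cocompact (g := fun y ↦ (1 + y ^ 2)⁻¹) ?_
    (integrable_inv_one_add_sq.integrableAtFilter _)
  refine Asymptotics.IsBigO.of_bound (2 * K) ?_
  filter_upwards [hdecay, tendsto_norm_cocompact_atTop.eventually_ge_atTop 1] with y hy hy1
  have hy2 : 1 ≤ y ^ 2 := by
    simpa [Real.norm_eq_abs, sq_abs] using pow_le_pow_left₀ zero_le_one hy1 2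
  have hK : 0 ≤ K := by
    have := (norm_nonneg _).trans hy
    rwa [le_div_iff₀ (by positivity), zero_mul] at this
  rw [Real.norm_eq_abs, abs_of_pos (by positivity)]
  calc ‖φ y‖ ≤ K / y ^ 2 := hy
    _ ≤ 2 * K * (1 + y ^ 2)⁻¹ := by
      rw [← div_eq_mul_inv, div_le_div_iff₀ (by positivity) (by positivity)]
      nlinarith

variable [NormedSpace ℂ E]

lemma tendsto_intervalIntegral_of_norm_le {ι : Type*} {l : Filter ι} {F : ι → ℝ → E} {b : ι → ℝ}
    {a₁ a₂ : ℝ} (hF : ∀ᶠ i in l, ∀ x ∈ Ι a₁ a₂, ‖F i x‖ ≤ b i) (hb : Tendsto b l (𝓝 0)) :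
    Tendsto (fun i ↦ ∫ x in a₁..a₂, F i x) l (𝓝 0) :=
  squeeze_zero_norm' (hF.mono fun _ hi ↦ norm_integral_le_of_norm_le_const hi)
    (by simpa using hb.mul_const |a₂ - a₁|)

lemma tendsto_rectIntegral_of_norm_le_div_sq [CompleteSpace E] {g : ℂ → E} {lo hi K : ℝ}
    (hle : lo ≤ hi) (hg : ContinuousOn g ({lo, hi} ×ℂ univ))
    (hdecay : ∀ s : ℂ, s.re ∈ Icc lo hi → 1 ≤ |s.im| → ‖g s‖ ≤ K / s.im ^ 2) :
    Tendsto (fun T : ℝ ↦ rectIntegral g ⟨lo, -T⟩ ⟨hi, T⟩) atTop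
      (𝓝 ((I • ∫ y : ℝ, g (hi + y * I)) - I • ∫ y : ℝ, g (lo + y * I))) := by
  have hsegment :
      ∀ᶠ y : ℝ in cocompact ℝ, ∀ x ∈ Icc lo hi, ‖g (x + y * I)‖ ≤ K / y ^ 2 := by
    filter_upwards [tendsto_norm_cocompact_atTop.eventually_ge_atTop 1] with y hy x hx
    simpa using hdecay (x + y * I) (by simpa using hx) (by simpa using hy)
  have hhorizontal :
      Tendsto (fun y : ℝ ↦ ∫ x in lo..hi, g (x + y * I)) (cocompact ℝ) (𝓝 0) :=
    tendsto_intervalIntegral_of_norm_le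
      (hsegment.mono fun y hy x hx ↦ hy x (Ioc_subset_Icc_self (uIoc_of_le hle ▸ hx)))
      (tendsto_div_sq_cocompact K)
  have hvertical {c : ℝ} (hc : c = lo ∨ c = hi) :
      Tendsto (fun T : ℝ ↦ ∫ y in -T..T, g (c + y * I)) atTop
        (𝓝 (∫ y : ℝ, g (c + y * I))) := by
    refine intervalIntegral_tendsto_integral (integrable_of_norm_le_div_sq (K := K)
      (hg.comp_continuous (by fun_prop) fun y ↦ by simpa [mem_reProdIm]) ?_)
      tendsto_neg_atTop_atBot tendsto_id
    exact hsegment.mono fun y hy ↦ hy c (by rcases hc with rfl | rfl <;> simp [hle])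
  have := (((hhorizontal.mono_left atBot_le_cocompact).comp tendsto_neg_atTop_atBot).sub
    (hhorizontal.mono_left atTop_le_cocompact)).add ((hvertical (.inr rfl)).const_smul I)
      |>.sub ((hvertical (.inl rfl)).const_smul I)
  simpa [rectIntegral] using this

end Decay

noncomputable def cosPiSlope : ℂ → ℂ := dslope (fun s ↦ cos (π * s)) (1 / 2)

lemma differentiable_cosPiSlope : Differentiable ℂ cosPiSlope := by
  rw [← differentiableOn_univ]
  exact (differentiableOn_dslope univ_mem).2 (by fun_prop)

lemma sub_mul_cosPiSlope (s : ℂ) : (s - 1 / 2) * cosPiSlope s = cos (π * s) := by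
  have hhalf : cos (π * (1 / 2)) = 0 := by
    rw [← mul_div_assoc, mul_one]; exact_mod_cast Real.cos_pi_div_two
  rw [cosPiSlope, ← smul_eq_mul, sub_smul_dslope, hhalf, sub_zero]

lemma cosPiSlope_half : cosPiSlope (1 / 2) = -π := by
  have h : HasDerivAt (fun s : ℂ ↦ cos (π * s)) (-sin (π * (1 / 2)) * π) (1 / 2) := by
    simpa using ((hasDerivAt_id (1 / 2 : ℂ)).const_mul (π : ℂ)).ccos
  rw [cosPiSlope, dslope_same, h.deriv, ← mul_div_assoc, mul_one]
  norm_cast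
  simp

lemma cosPiSlope_ne_zero {s : ℂ} (h0 : 0 < s.re) (h1 : s.re < 1) : cosPiSlope s ≠ 0 := by
  rcases eq_or_ne s (1 / 2) with rfl | hs
  · rw [cosPiSlope_half]
    exact neg_ne_zero.2 (ofReal_ne_zero.2 Real.pi_ne_zero)
  · intro h
    exact cos_pi_mul_ne_zero h0 h1 hs (by rw [← sub_mul_cosPiSlope, h, mul_zero])

lemma rpow_le_rpow_add_rpow_of_mem_Icc {t a b x : ℝ} (ht : 0 < t) (hx : x ∈ Icc a b) :
    t ^ x ≤ t ^ a + t ^ b := by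
  rcases le_total 1 t with h | h
  · linarith [Real.rpow_le_rpow_of_exponent_le h hx.2, Real.rpow_nonneg ht.le a]
  · linarith [Real.rpow_le_rpow_of_exponent_ge ht h hx.1, Real.rpow_nonneg ht.le b]

lemma lines_subset_strip_diff {lo hi : ℝ} (hle : lo ≤ hi) {p : ℂ} (hp : p.re ∈ Ioo lo hi) :
    {lo, hi} ×ℂ univ ⊆ (Icc lo hi ×ℂ univ) \ {p} := by
  rintro s ⟨hs, -⟩
  obtain h | h : s.re = lo ∨ s.re = hi := hs
  all_goals refine ⟨⟨by simp [h, hle], trivial⟩, ?_⟩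
  all_goals rintro rfl; linarith [hp.1, hp.2]

section Integrand

variable {f : ℂ → ℂ} {m : ℕ} {t : ℝ}

noncomputable def rhoIntegrand (f : ℂ → ℂ) (m : ℕ) (t : ℝ) (s : ℂ) : ℂ :=
  s ^ (-(m : ℂ) - 2) * tan (π * s) * f s * (t : ℂ) ^ (-s)

lemma verticalRho_eq (f : ℂ → ℂ) (m : ℕ) (c t : ℝ) :
    verticalRho f m c t = -(2 * π * I)⁻¹ * (I * ∫ y : ℝ, rhoIntegrand f m t (c + y * I)) :=
  rfl

noncomputable def rhoNumerator (f : ℂ → ℂ) (m : ℕ) (t : ℝ) (s : ℂ) : ℂ :=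
  (s ^ (m + 2))⁻¹ * (sin (π * s) / cosPiSlope s) * f s * (t : ℂ) ^ (-s)

lemma rhoIntegrand_eq {s : ℂ} (hs : s ≠ 1 / 2) :
    rhoIntegrand f m t s = (s - 1 / 2)⁻¹ * rhoNumerator f m t s := by
  have := sub_ne_zero.2 hs
  rw [rhoIntegrand, rhoNumerator, cpow_neg_natCast_sub_two, tan_eq_sin_div_cos,
    ← sub_mul_cosPiSlope]
  field_simp

lemma rhoNumerator_half :
    rhoNumerator f m t (1 / 2) =
      -(2 ^ (m + 2) / π * f (1 / 2) * (t : ℂ) ^ (-(1 / 2 : ℂ))) := by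
  have hsin : sin (π * (1 / 2)) = 1 := by
    rw [← mul_div_assoc, mul_one]; exact_mod_cast Real.sin_pi_div_two
  rw [rhoNumerator, cosPiSlope_half, hsin, one_div, inv_pow, inv_inv]
  ring

lemma differentiableOn_rhoNumerator {U : Set ℂ} (hU : U ⊆ Ioo 0 1 ×ℂ univ)
    (hf : DifferentiableOn ℂ f U) : DifferentiableOn ℂ (rhoNumerator f m t) U := by
  intro s hs
  obtain ⟨⟨h0, h1⟩, -⟩ := hU hs
  have hs0 : s ≠ 0 := fun h ↦ by simp [h] at h0
  refine (((DifferentiableAt.differentiableWithinAt ?_).mul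
    (DifferentiableAt.differentiableWithinAt ?_)).mul (hf s hs)).mul
    (DifferentiableAt.differentiableWithinAt ?_)
  · exact ((differentiable_pow _).differentiableAt).inv (pow_ne_zero _ hs0)
  · exact ((by fun_prop : Differentiable ℂ fun s : ℂ ↦ sin (π * s)) s).div
      (differentiable_cosPiSlope s) (cosPiSlope_ne_zero h0 h1)
  · exact differentiableAt_id.neg.const_cpow (.inr (neg_ne_zero.2 hs0))

lemma continuousOn_rhoIntegrand {U : Set ℂ} (hU : U ⊆ Ioo 0 1 ×ℂ univ)
    (hf : DifferentiableOn ℂ f U) : ContinuousOn (rhoIntegrand f m t) (U \ {1 / 2}) :=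
  (((continuousOn_id.sub continuousOn_const).inv₀ fun _ hs ↦ sub_ne_zero.2 hs.2).mul
    ((differentiableOn_rhoNumerator hU hf).continuousOn.mono sdiff_subset)).congr
      fun _ hs ↦ rhoIntegrand_eq hs.2

lemma norm_rhoIntegrand_le {lo hi C : ℝ} (ht : 0 < t) (hlo : 0 < lo) {s : ℂ}
    (hre : s.re ∈ Icc lo hi) (him : 1 ≤ |s.im|) (hf : ‖f s‖ ≤ C * ‖s‖ ^ m) :
    ‖rhoIntegrand f m t s‖ ≤ 3 * C * (t ^ (-hi) + t ^ (-lo)) / s.im ^ 2 := by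
  have hs : 0 < ‖s‖ := norm_pos_iff.2 fun h ↦ by simp [h] at hre; linarith [hre.1]
  have hC : 0 ≤ C := by
    by_contra! hC
    linarith [norm_nonneg (f s), mul_neg_of_neg_of_pos hC (pow_pos hs m)]
  have hpow : ‖(t : ℂ) ^ (-s)‖ ≤ t ^ (-hi) + t ^ (-lo) := by
    rw [norm_cpow_eq_rpow_re_of_pos ht]
    exact rpow_le_rpow_add_rpow_of_mem_Icc ht (by simpa using And.symm hre)
  have htan : ‖tan (π * s)‖ ≤ 3 := by
    refine norm_tan_le_three ?_
    rw [im_ofReal_mul, abs_mul, abs_of_pos Real.pi_pos]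
    nlinarith [Real.pi_gt_three]
  have him2 : s.im ^ 2 ≤ ‖s‖ ^ 2 := by
    rw [← sq_abs]; gcongr; exact abs_im_le_norm s
  calc ‖rhoIntegrand f m t s‖
      = (‖s‖ ^ (m + 2))⁻¹ * ‖tan (π * s)‖ * ‖f s‖ * ‖(t : ℂ) ^ (-s)‖ := by
        simp [rhoIntegrand, cpow_neg_natCast_sub_two]
    _ ≤ (‖s‖ ^ (m + 2))⁻¹ * 3 * (C * ‖s‖ ^ m) * (t ^ (-hi) + t ^ (-lo)) := by gcongr
    _ = 3 * C * (t ^ (-hi) + t ^ (-lo)) / ‖s‖ ^ 2 := by field_simp; ring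
    _ ≤ 3 * C * (t ^ (-hi) + t ^ (-lo)) / s.im ^ 2 := by
        have : 0 < s.im ^ 2 := by nlinarith [sq_abs s.im]
        gcongr

lemma rectIntegral_rhoIntegrand {lo hi T : ℝ} (hlo : 0 < lo) (hlo_half : lo < 1 / 2)
    (hhi_half : 1 / 2 < hi) (hhi : hi < 1) (hf : DifferentiableOn ℂ f (Icc lo hi ×ℂ univ))
    (hT : 0 < T) :
    rectIntegral (rhoIntegrand f m t) ⟨lo, -T⟩ ⟨hi, T⟩ =
      (2 * π * I) * rhoNumerator f m t (1 / 2) := by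
  have hp : (1 / 2 : ℂ) ∈ Ioo lo hi ×ℂ Ioo (-T) T :=
    ⟨⟨by simpa using hlo_half, by simpa using hhi_half⟩, by simpa using hT,
      by simpa using hT⟩
  have hU : Icc lo hi ×ℂ univ ⊆ Ioo 0 1 ×ℂ univ := fun s hs ↦
    ⟨⟨hlo.trans_le hs.1.1, hs.1.2.trans_lt hhi⟩, trivial⟩
  have hrect : [[lo, hi]] ×ℂ [[-T, T]] ⊆ Icc lo hi ×ℂ univ := fun s hs ↦
    ⟨by simpa [uIcc_of_le (hlo_half.trans hhi_half).le] using hs.1, trivial⟩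
  rw [rectIntegral_congr fun s hs ↦
    rhoIntegrand_eq (ne_of_mem_of_not_mem hs (notMem_rectBoundary hp))]
  exact rectIntegral_sub_inv_smul ((differentiableOn_rhoNumerator hU hf).mono hrect) hp

end Integrand

theorem vertical_contour_shift_general
    (α β : ℝ) (hα : 0 < α) (hβ : β < 1)
    (f : ℂ → ℂ)
    (hf : DifferentiableOn ℂ f {s : ℂ | α < s.re ∧ s.re < β})
    (C : ℝ) (m : ℕ)
    (hbound : ∀ s : ℂ, α < s.re → s.re < β →
        ‖f s‖ ≤ C * ‖s‖ ^ m)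
    (cLo cHi : ℝ) (h1 : α < cLo) (h2 : cLo < 1/2) (h3 : 1/2 < cHi) (h4 : cHi < β) :
    ∀ t : ℝ, 0 < t →
      verticalRho f m cHi t
        = (2 ^ (m + 2) / (Real.pi : ℂ)) * f (1/2) * (t : ℂ) ^ (-(1/2 : ℂ))
            + verticalRho f m cLo t := by
  intro t ht
  have hstrip : Icc cLo cHi ×ℂ univ ⊆ {s : ℂ | α < s.re ∧ s.re < β} :=
    fun s hs ↦ ⟨h1.trans_le hs.1.1, hs.1.2.trans_lt h4⟩
  have hunit : Icc cLo cHi ×ℂ univ ⊆ Ioo 0 1 ×ℂ univ :=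
    fun s hs ↦ ⟨⟨hα.trans (hstrip hs).1, (hstrip hs).2.trans hβ⟩, trivial⟩
  have hlines : ContinuousOn (rhoIntegrand f m t) ({cLo, cHi} ×ℂ univ) :=
    (continuousOn_rhoIntegrand hunit (hf.mono hstrip)).mono
      (lines_subset_strip_diff (h2.trans h3).le (by norm_num [h2, h3]))
  have hlim := tendsto_rectIntegral_of_norm_le_div_sq (h2.trans h3).le hlines fun s hs him ↦
    norm_rhoIntegrand_le ht (hα.trans h1) hs him
      (hbound s (h1.trans_le hs.1) (hs.2.trans_lt h4))
  have hres : ∀ᶠ T in atTop, rectIntegral (rhoIntegrand f m t) ⟨cLo, -T⟩ ⟨cHi, T⟩ =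
      (2 * π * I) * rhoNumerator f m t (1 / 2) :=
    (eventually_gt_atTop 0).mono fun T hT ↦
      rectIntegral_rhoIntegrand (hα.trans h1) h2 h3 (h4.trans hβ) (hf.mono hstrip) hT
  have hshift := tendsto_nhds_unique (tendsto_const_nhds.congr' (EventuallyEq.symm hres)) hlim
  simp only [smul_eq_mul] at hshift
  have h2πI : (2 * π * I : ℂ)⁻¹ * (2 * π * I) = 1 :=
    inv_mul_cancel₀ (by simp [Real.pi_ne_zero])
  rw [verticalRho_eq, verticalRho_eq, ← neg_neg (2 ^ (m + 2) / (π : ℂ) * _ * _),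
    ← rhoNumerator_half]
  linear_combination (2 * π * I : ℂ)⁻¹ * hshift - rhoNumerator f m t (1 / 2) * h2πI

theorem vertical_contour_shift
    (α β : ℝ) (hα : 0 < α) (hα2 : α < 1/2) (hβ1 : 1/2 < β) (hβ : β < 1)
    (f : ℂ → ℂ)
    (hf : DifferentiableOn ℂ f {s : ℂ | α < s.re ∧ s.re < β})
    (C : ℝ) (hC : 0 < C) (m : ℕ)
    (hbound : ∀ s : ℂ, α < s.re → s.re < β →
        ‖f s‖ ≤ C * ‖s‖ ^ m)
    (cLo cHi : ℝ) (h1 : α < cLo) (h2 : cLo < 1/2) (h3 : 1/2 < cHi) (h4 : cHi < β) :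
    ∀ t : ℝ, 0 < t →
      verticalRho f m cHi t
        = (2 ^ (m + 2) / (Real.pi : ℂ)) * f (1/2) * (t : ℂ) ^ (-(1/2 : ℂ))
            + verticalRho f m cLo t :=
  vertical_contour_shift_general α β hα hβ f hf C m hbound cLo cHi h1 h2 h3 h4
end
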